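/- For every threshold τ > 0, define T_τ : [0, 1] → ℝ by T_τ(t) = Φ̄_τ(0) − inf_{u ∈ ℝ} ( ((1 − t)/2) · Φ̄_τ(−u) + ((1 + t)/2) · Φ̄_τ(u) ). Then T_τ satisfies the linear lower bound T_τ(t) ≥ τ·t for all t ∈ [0, 1], and T_τ(0) = 0. -/

import Mathlib

/-- The generalized linear-core surrogate `Φ̄_τ` with threshold `τ > 0`. -/
noncomputable def barPhiTau (Φ : ℝ → ℝ) (τ : ℝ) (u : ℝ) : ℝ :=
  if τ < u then Φ (τ - u) / deriv Φ 0
  else if u < -τ then Φ (-τ - u) / deriv Φ 0 + 2 * τ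
  else -u + τ + Φ 0 / deriv Φ 0

/-- The transformation
`T_τ(t) = Φ̄_τ(0) - inf_u ((1-t)/2 · Φ̄_τ(-u) + (1+t)/2 · Φ̄_τ(u))`. -/
noncomputable def Ttau (Φ : ℝ → ℝ) (τ : ℝ) (t : ℝ) : ℝ :=
  barPhiTau Φ τ 0 -
    ⨅ u : ℝ, ((1 - t) / 2 * barPhiTau Φ τ (-u) + (1 + t) / 2 * barPhiTau Φ τ u)

/-!
Write `c = Φ(0)/Φ'(0)`. Evaluating the inner objective at `u = τ` gives `(1 - t)τ + c`, while
`Φ̄_τ(0) = τ + c`; this is the bound `T_τ(t) ≥ τt`. For `t = 0` the objective is the symmetric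
average `(Φ̄_τ(u) + Φ̄_τ(-u))/2`, which is `τ + c` on `[-τ, τ]` and, outside, is at least `τ + c`
by midpoint convexity of `Φ`, so its infimum is attained at `u = 0` and `T_τ(0) = 0`.
-/

noncomputable def condRisk (Φ : ℝ → ℝ) (τ t u : ℝ) : ℝ :=
  (1 - t) / 2 * barPhiTau Φ τ (-u) + (1 + t) / 2 * barPhiTau Φ τ u

lemma ConvexOn.two_mul_map_zero_le_add_map_neg {Φ : ℝ → ℝ} (hconv : ConvexOn ℝ Set.univ Φ) (a : ℝ) :
    2 * Φ 0 ≤ Φ a + Φ (-a) := by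
  have h := hconv.2 (Set.mem_univ a) (Set.mem_univ (-a)) (by norm_num : (0 : ℝ) ≤ 1 / 2)
    (by norm_num : (0 : ℝ) ≤ 1 / 2) (by norm_num)
  simp only [smul_eq_mul, mul_neg, add_neg_cancel] at h
  linarith

section barPhiTau

variable {Φ : ℝ → ℝ} {τ u : ℝ}

lemma barPhiTau_of_abs_le (hu : |u| ≤ τ) : barPhiTau Φ τ u = -u + τ + Φ 0 / deriv Φ 0 := by
  rw [abs_le] at hu
  rw [barPhiTau, if_neg (by linarith), if_neg (by linarith)]

lemma barPhiTau_zero (hτ : 0 ≤ τ) : barPhiTau Φ τ 0 = τ + Φ 0 / deriv Φ 0 := by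
  rw [barPhiTau_of_abs_le (by rwa [abs_zero]), neg_zero, zero_add]

lemma barPhiTau_of_lt (hu : τ < u) : barPhiTau Φ τ u = Φ (τ - u) / deriv Φ 0 :=
  if_pos hu

lemma barPhiTau_of_lt_neg (hτ : 0 ≤ τ) (hu : u < -τ) :
    barPhiTau Φ τ u = Φ (-τ - u) / deriv Φ 0 + 2 * τ := by
  rw [barPhiTau, if_neg (by linarith), if_pos hu]

lemma barPhiTau_nonneg (hτ : 0 ≤ τ) (hnn : ∀ u, 0 ≤ Φ u) (hd0 : 0 ≤ deriv Φ 0) :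
    0 ≤ barPhiTau Φ τ u := by
  have hc : ∀ v, 0 ≤ Φ v / deriv Φ 0 := fun v => div_nonneg (hnn v) hd0
  unfold barPhiTau
  split_ifs with h₁ h₂
  · exact hc _
  · linarith [hc (-τ - u)]
  · linarith [hc 0]

lemma barPhiTau_add_barPhiTau_neg_ge (hconv : ConvexOn ℝ Set.univ Φ) (hd0 : 0 < deriv Φ 0)
    (hτ : 0 ≤ τ) (u : ℝ) :
    2 * (τ + Φ 0 / deriv Φ 0) ≤ barPhiTau Φ τ u + barPhiTau Φ τ (-u) := by
  wlog hu : 0 ≤ u generalizing u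
  · simpa only [neg_neg, add_comm] using this (-u) (by linarith)
  rcases le_or_gt u τ with huτ | huτ
  · rw [barPhiTau_of_abs_le (by rwa [abs_of_nonneg hu]),
      barPhiTau_of_abs_le (by rwa [abs_neg, abs_of_nonneg hu])]
    linarith
  · rw [barPhiTau_of_lt huτ, barPhiTau_of_lt_neg hτ (by linarith),
      show -τ - -u = -(τ - u) by ring]
    have hmid : 2 * Φ 0 / deriv Φ 0 ≤ (Φ (τ - u) + Φ (-(τ - u))) / deriv Φ 0 :=
      div_le_div_of_nonneg_right (hconv.two_mul_map_zero_le_add_map_neg (τ - u)) hd0.le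
    rw [add_div, mul_div_assoc] at hmid
    linarith

end barPhiTau

section condRisk

variable {Φ : ℝ → ℝ} {τ t : ℝ}

lemma condRisk_nonneg (hτ : 0 ≤ τ) (hnn : ∀ u, 0 ≤ Φ u) (hd0 : 0 ≤ deriv Φ 0)
    (ht : t ∈ Set.Icc (-1 : ℝ) 1) (u : ℝ) : 0 ≤ condRisk Φ τ t u := by
  have h₁ : 0 ≤ (1 - t) / 2 := by linarith [ht.2]
  have h₂ : 0 ≤ (1 + t) / 2 := by linarith [ht.1]
  unfold condRisk
  have := barPhiTau_nonneg (u := u) hτ hnn hd0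
  have := barPhiTau_nonneg (u := -u) hτ hnn hd0
  positivity

lemma condRisk_self (hτ : 0 ≤ τ) : condRisk Φ τ t τ = (1 - t) * τ + Φ 0 / deriv Φ 0 := by
  rw [condRisk, barPhiTau_of_abs_le (by rw [abs_neg, abs_of_nonneg hτ]),
    barPhiTau_of_abs_le (abs_of_nonneg hτ).le]
  ring

lemma Ttau_eq_sub_iInf_condRisk :
    Ttau Φ τ t = barPhiTau Φ τ 0 - ⨅ u, condRisk Φ τ t u :=
  rfl

lemma condRisk_zero_isLeast (hconv : ConvexOn ℝ Set.univ Φ) (hd0 : 0 < deriv Φ 0)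
    (hτ : 0 ≤ τ) : IsLeast (Set.range (condRisk Φ τ 0)) (τ + Φ 0 / deriv Φ 0) := by
  refine ⟨⟨0, ?_⟩, ?_⟩
  · rw [condRisk, neg_zero, barPhiTau_zero hτ]
    ring
  · rintro _ ⟨u, rfl⟩
    have := barPhiTau_add_barPhiTau_neg_ge hconv hd0 hτ u
    rw [condRisk]
    linarith

end condRisk

theorem Ttau_linear_lower_bound_general (Φ : ℝ → ℝ)
    (hconv : ConvexOn ℝ Set.univ Φ)
    (hnn : ∀ u, 0 ≤ Φ u) (hd0 : 0 < deriv Φ 0)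
    (τ : ℝ) (hτ : 0 < τ) :
    (∀ t ∈ Set.Icc (0 : ℝ) 1, τ * t ≤ Ttau Φ τ t) ∧ Ttau Φ τ 0 = 0 := by
  simp only [Ttau_eq_sub_iInf_condRisk, barPhiTau_zero hτ.le]
  refine ⟨fun t ht => ?_, ?_⟩
  · have hbdd : BddBelow (Set.range (condRisk Φ τ t)) :=
      ⟨0, by
        rintro _ ⟨u, rfl⟩
        exact condRisk_nonneg hτ.le hnn hd0.le ⟨by linarith [ht.1], ht.2⟩ u⟩
    have hinf := ciInf_le hbdd τ
    rw [condRisk_self hτ.le] at hinf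
    linarith
  · rw [(condRisk_zero_isLeast hconv hd0 hτ.le).isGLB.ciInf_eq, sub_self]

/-- for every `τ > 0`, `T_τ(t) ≥ τ·t` for all `t ∈ [0, 1]`, and
`T_τ(0) = 0`. -/
theorem Ttau_linear_lower_bound (Φ : ℝ → ℝ)
    (hconv : ConvexOn ℝ Set.univ Φ) (hdiff : Differentiable ℝ Φ)
    (hnn : ∀ u, 0 ≤ Φ u) (hd0 : 0 < deriv Φ 0)
    (τ : ℝ) (hτ : 0 < τ) :
    (∀ t ∈ Set.Icc (0 : ℝ) 1, τ * t ≤ Ttau Φ τ t) ∧ Ttau Φ τ 0 = 0 :=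
  Ttau_linear_lower_bound_general Φ hconv hnn hd0 τ hτ
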